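/- arXiv:2110.11707 — 3 statements merged into one kernel-verified Lean document; each statement's English description precedes it below -/
import Mathlib

section
/- If γ is an optimal transport plan for the cost c (i.e., γ minimizes ∫ c dπ over all couplings π of μ and ν), c is continuous, and the total cost is finite, then the support of γ is a c-cyclically monotone set. -/
open MeasureTheory

/-- `Γ` is `c`-cyclically monotone. -/
def CCyclicallyMonotone {X Y : Type*} (c : X → Y → ℝ) (Γ : Set (X × Y)) : Prop :=
  ∀ (k : ℕ) (pts : Fin k → X × Y), (∀ i, pts i ∈ Γ) →
    ∀ σ : Equiv.Perm (Fin k),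
      ∑ i, c (pts i).1 (pts i).2 ≤ ∑ i, c (pts i).1 (pts (σ i)).2

/-- The (closed) support of a measure on a topological space: the set of points all of
whose open neighbourhoods have positive measure. -/
def measureSupport {Z : Type*} [TopologicalSpace Z] [MeasurableSpace Z]
    (π : Measure Z) : Set Z :=
  {z | ∀ U : Set Z, IsOpen U → z ∈ U → π U ≠ 0}

lemma ofReal_sum_le {ι : Type*} (s : Finset ι) (f : ι → ℝ) :
    ENNReal.ofReal (∑ i ∈ s, f i) ≤ ∑ i ∈ s, ENNReal.ofReal (f i) := by
  classical
  induction s using Finset.induction with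
  | empty => simp
  | insert _ _ h ih =>
    rw [Finset.sum_insert h, Finset.sum_insert h]
    exact le_trans ENNReal.ofReal_add_le (by gcongr)

lemma measure_map_finset_sum {α β : Type*} [MeasurableSpace α] [MeasurableSpace β]
    {ι : Type*} (s : Finset ι) (μ : ι → Measure α) {f : α → β} (hf : Measurable f) :
    Measure.map f (∑ i ∈ s, μ i) = ∑ i ∈ s, Measure.map f (μ i) := by
  classical
  induction s using Finset.induction with
  | empty => simp
  | insert _ _ h ih => rw [Finset.sum_insert h, Finset.sum_insert h, Measure.map_add _ _ hf, ih]

set_option maxHeartbeats 2000000 in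
/-- An optimal transport plan for a continuous cost with finite total cost has
`c`-cyclically monotone support. -/
theorem support_of_optimal_plan_cCyclicallyMonotone
    {X Y : Type*} [MetricSpace X] [CompleteSpace X] [SecondCountableTopology X]
    [MeasurableSpace X] [BorelSpace X]
    [MetricSpace Y] [CompleteSpace Y] [SecondCountableTopology Y]
    [MeasurableSpace Y] [BorelSpace Y]
    (μ : Measure X) (ν : Measure Y) [IsProbabilityMeasure μ] [IsProbabilityMeasure ν]
    (c : X → Y → ℝ) (hc : Continuous (fun z : X × Y => c z.1 z.2))
    (hc_nonneg : ∀ x y, 0 ≤ c x y)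
    (π : Measure (X × Y)) [IsProbabilityMeasure π]
    (hπ₁ : π.map Prod.fst = μ) (hπ₂ : π.map Prod.snd = ν)
    (hfin : ∫⁻ z, ENNReal.ofReal (c z.1 z.2) ∂π < ⊤)
    (hopt : ∀ π' : Measure (X × Y), IsProbabilityMeasure π' →
      π'.map Prod.fst = μ → π'.map Prod.snd = ν →
      ∫⁻ z, ENNReal.ofReal (c z.1 z.2) ∂π ≤ ∫⁻ z, ENNReal.ofReal (c z.1 z.2) ∂π') :
    CCyclicallyMonotone c (measureSupport π) := by
  classical
  intro k pts hpts σ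
  by_contra hcon
  push_neg at hcon
  -- hcon : ∑ i, c (pts i).1 (pts (σ i)).2 < ∑ i, c (pts i).1 (pts i).2
  rcases Nat.eq_zero_or_pos k with hk0 | hk
  · subst hk0; simp at hcon
  haveI : NeZero k := ⟨hk.ne'⟩
  set cc : Fin k → ℝ := fun i => c (pts i).1 (pts i).2 with hcc
  set dd : Fin k → ℝ := fun i => c (pts i).1 (pts (σ i)).2 with hdd
  set Δ : ℝ := ∑ i, cc i - ∑ i, dd i with hΔ
  have hΔpos : 0 < Δ := by simp only [hΔ]; linarith [hcon]
  set η : ℝ := Δ / (4 * k) with hη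
  have hηpos : 0 < η := by positivity
  -- neighborhoods for lower bound at (xᵢ, yᵢ)
  have h0 : ∀ i : Fin k, ∃ (U : Set X) (V : Set Y), IsOpen U ∧ IsOpen V ∧
      (pts i).1 ∈ U ∧ (pts i).2 ∈ V ∧
      ∀ x ∈ U, ∀ y ∈ V, cc i - η < c x y := by
    intro i
    have hopen : IsOpen ((fun z : X × Y => c z.1 z.2) ⁻¹' Set.Ioi (cc i - η)) :=
      isOpen_Ioi.preimage hc
    have hmem : ((pts i).1, (pts i).2) ∈ (fun z : X × Y => c z.1 z.2) ⁻¹' Set.Ioi (cc i - η) := by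
      simp [Set.mem_preimage, hcc]; linarith
    obtain ⟨U, V, hU, hV, hx, hy, hsub⟩ := isOpen_prod_iff.mp hopen _ _ hmem
    exact ⟨U, V, hU, hV, hx, hy, fun x hxU y hyV => hsub (Set.mk_mem_prod hxU hyV)⟩
  choose U0 V0 hU0 hV0 hxU0 hyV0 hlow using h0
  -- neighborhoods for upper bound at (xᵢ, y_{σ i})
  have h1 : ∀ i : Fin k, ∃ (U : Set X) (V : Set Y), IsOpen U ∧ IsOpen V ∧
      (pts i).1 ∈ U ∧ (pts (σ i)).2 ∈ V ∧
      ∀ x ∈ U, ∀ y ∈ V, c x y < dd i + η := by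
    intro i
    have hopen : IsOpen ((fun z : X × Y => c z.1 z.2) ⁻¹' Set.Iio (dd i + η)) :=
      isOpen_Iio.preimage hc
    have hmem : ((pts i).1, (pts (σ i)).2) ∈ (fun z : X × Y => c z.1 z.2) ⁻¹' Set.Iio (dd i + η) := by
      simp [Set.mem_preimage, hdd]; linarith
    obtain ⟨U, V, hU, hV, hx, hy, hsub⟩ := isOpen_prod_iff.mp hopen _ _ hmem
    exact ⟨U, V, hU, hV, hx, hy, fun x hxU y hyV => hsub (Set.mk_mem_prod hxU hyV)⟩
  choose U1 V1 hU1 hV1 hxU1 hyV1 hupp using h1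
  set U : Fin k → Set X := fun i => U0 i ∩ U1 i with hU
  set V : Fin k → Set Y := fun i => V0 i ∩ V1 (σ.symm i) with hV
  have hUopen : ∀ i, IsOpen (U i) := fun i => (hU0 i).inter (hU1 i)
  have hVopen : ∀ i, IsOpen (V i) := fun i => (hV0 i).inter (hV1 (σ.symm i))
  have hxU : ∀ i, (pts i).1 ∈ U i := fun i => ⟨hxU0 i, hxU1 i⟩
  have hyV : ∀ i, (pts i).2 ∈ V i := by
    intro i
    refine ⟨hyV0 i, ?_⟩
    have := hyV1 (σ.symm i)
    rwa [Equiv.apply_symm_apply] at this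
  have hlow' : ∀ i, ∀ x ∈ U i, ∀ y ∈ V i, cc i - η < c x y :=
    fun i x hx y hy => hlow i x hx.1 y hy.1
  have hupp' : ∀ i, ∀ x ∈ U i, ∀ y ∈ V (σ i), c x y < dd i + η := by
    intro i x hx y hy
    have := hupp i x hx.2 y ?_
    · exact this
    · have := hy.2; rwa [Equiv.symm_apply_apply] at this
  -- positive masses
  set S : Fin k → Set (X × Y) := fun i => U i ×ˢ V i with hS
  have hSopen : ∀ i, IsOpen (S i) := fun i => (hUopen i).prod (hVopen i)
  have hSmeas : ∀ i, MeasurableSet (S i) := fun i => (hSopen i).measurableSet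
  set m : Fin k → ENNReal := fun i => π (S i) with hm
  have hmpos : ∀ i, 0 < m i := by
    intro i
    have := hpts i (S i) (hSopen i) (Set.mk_mem_prod (hxU i) (hyV i))
    exact pos_iff_ne_zero.mpr this
  have hmle1 : ∀ i, m i ≤ 1 := fun i => prob_le_one
  have hmfin : ∀ i, m i ≠ ⊤ := fun i => (lt_of_le_of_lt (hmle1 i) ENNReal.one_lt_top).ne
  -- epsilon
  haveI : Nonempty (Fin k) := ⟨⟨0, hk⟩⟩
  set ε : ENNReal := Finset.univ.inf' Finset.univ_nonempty m with hε
  have hεle : ∀ i, ε ≤ m i := fun i => Finset.inf'_le _ (Finset.mem_univ i)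
  have hεpos : 0 < ε := by
    rw [hε, Finset.lt_inf'_iff]
    exact fun i _ => hmpos i
  have hεne : ε ≠ 0 := hεpos.ne'
  have hεfin : ε ≠ ⊤ := by
    have := le_trans (hεle ⟨0, hk⟩) (hmle1 ⟨0, hk⟩)
    exact (lt_of_le_of_lt this ENNReal.one_lt_top).ne
  have hεle1 : ε ≤ 1 := le_trans (hεle ⟨0, hk⟩) (hmle1 ⟨0, hk⟩)
  have hkne : (k : ENNReal) ≠ 0 := Nat.cast_ne_zero.mpr hk.ne'
  have hkfin : (k : ENNReal) ≠ ⊤ := ENNReal.natCast_ne_top k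
  -- the pieces
  set ce : Fin k → ENNReal := fun i => ε / ((k : ENNReal) * m i) with hce
  have hkmne : ∀ i, (k : ENNReal) * m i ≠ 0 := fun i => by
    simp [hkne, (hmpos i).ne']
  have hkmfin : ∀ i, (k : ENNReal) * m i ≠ ⊤ := fun i => ENNReal.mul_ne_top hkfin (hmfin i)
  set lam : Fin k → Measure (X × Y) := fun i => ce i • π.restrict (S i) with hlam
  have hcemul : ∀ i, ce i * m i = ε / k := by
    intro i
    rw [hce]
    simp only
    rw [div_eq_mul_inv, ENNReal.mul_inv (Or.inl hkne) (Or.inl hkfin), ← mul_assoc ε,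
      mul_assoc (ε * (k : ENNReal)⁻¹), ENNReal.inv_mul_cancel (hmpos i).ne' (hmfin i),
      mul_one, ← div_eq_mul_inv]
  have hce_le : ∀ i, ce i ≤ ((k : ENNReal))⁻¹ := by
    intro i
    rw [hce]
    simp only
    rw [ENNReal.div_le_iff (hkmne i) (hkmfin i), ← mul_assoc,
      ENNReal.inv_mul_cancel hkne hkfin, one_mul]
    exact hεle i
  have hεkne : ε / (k : ENNReal) ≠ 0 := by
    simp [ENNReal.div_eq_zero_iff, hεne, hkfin]
  have hεkfin : ε / (k : ENNReal) ≠ ⊤ := by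
    simp [ENNReal.div_eq_top, hεne, hεfin, hkne]
  have hlamuniv : ∀ i, lam i Set.univ = ε / k := by
    intro i
    rw [hlam]
    simp only [Measure.smul_apply, smul_eq_mul, Measure.restrict_apply MeasurableSet.univ,
      Set.univ_inter]
    exact hcemul i
  have hlamfin : ∀ i, IsFiniteMeasure (lam i) := by
    intro i
    exact ⟨by rw [hlamuniv i]; exact hεkfin.lt_top⟩
  set lamt : Measure (X × Y) := ∑ i, lam i with hlamt
  have hlamapp : ∀ s, lamt s = ∑ i, lam i s := by
    intro s
    rw [hlamt, Measure.finset_sum_apply]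
  have hlamle : lamt ≤ π := by
    rw [Measure.le_iff']
    intro s
    rw [hlamapp]
    have h1 : ∀ i : Fin k, lam i s ≤ ((k : ENNReal))⁻¹ * π s := by
      intro i
      simp only [hlam, Measure.smul_apply, smul_eq_mul]
      have h2 : π.restrict (S i) s ≤ π s := Measure.le_iff'.mp Measure.restrict_le_self s
      exact mul_le_mul' (hce_le i) h2
    calc ∑ i, lam i s ≤ ∑ _i : Fin k, ((k : ENNReal))⁻¹ * π s :=
          Finset.sum_le_sum (fun i _ => h1 i)
      _ = π s := by
        rw [Finset.sum_const, Finset.card_univ, Fintype.card_fin, nsmul_eq_mul,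
          ← mul_assoc, ENNReal.mul_inv_cancel hkne hkfin, one_mul]
  have hlamtuniv : lamt Set.univ = ε := by
    rw [hlamt, Measure.finset_sum_apply]
    simp_rw [hlamuniv]
    rw [Finset.sum_const, Finset.card_univ, Fintype.card_fin, nsmul_eq_mul,
      ENNReal.mul_div_cancel hkne hkfin]
  haveI hlamtfin : IsFiniteMeasure lamt := ⟨by rw [hlamtuniv]; exact hεfin.lt_top⟩
  -- marginal pieces
  set f : X × Y → ENNReal := fun z => ENNReal.ofReal (c z.1 z.2) with hf
  have hfmeas : Measurable f := ENNReal.measurable_ofReal.comp hc.measurable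
  set al : Fin k → Measure X := fun i => (lam i).map Prod.fst with hal
  set be : Fin k → Measure Y := fun i => (lam i).map Prod.snd with hbe
  have haluniv : ∀ i, al i Set.univ = ε / k := by
    intro i
    rw [hal]
    simp only
    rw [Measure.map_apply measurable_fst MeasurableSet.univ, Set.preimage_univ, hlamuniv]
  have hbeuniv : ∀ i, be i Set.univ = ε / k := by
    intro i
    rw [hbe]
    simp only
    rw [Measure.map_apply measurable_snd MeasurableSet.univ, Set.preimage_univ, hlamuniv]
  have halfin : ∀ i, IsFiniteMeasure (al i) :=
    fun i => ⟨by rw [haluniv i]; exact hεkfin.lt_top⟩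
  have hbefin : ∀ i, IsFiniteMeasure (be i) :=
    fun i => ⟨by rw [hbeuniv i]; exact hεkfin.lt_top⟩
  clear_value al be
  have halsf : ∀ i, SFinite (al i) := fun i => by haveI := halfin i; infer_instance
  have hbesf : ∀ i, SFinite (be i) := fun i => by haveI := hbefin i; infer_instance
  -- null complements
  have halnull : ∀ i, al i (U i)ᶜ = 0 := by
    intro i
    rw [hal]
    simp only
    rw [Measure.map_apply measurable_fst (hUopen i).measurableSet.compl, hlam]
    simp only [Measure.smul_apply, smul_eq_mul]
    rw [Measure.restrict_apply (measurable_fst (hUopen i).measurableSet.compl)]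
    have : Prod.fst ⁻¹' (U i)ᶜ ∩ S i = ∅ := by
      ext z
      simp only [Set.mem_inter_iff, Set.mem_preimage, Set.mem_compl_iff, hS,
        Set.mem_prod, Set.mem_empty_iff_false, iff_false]
      rintro ⟨h1, h2, _⟩
      exact h1 h2
    rw [this, measure_empty, mul_zero]
  have hbenull : ∀ i, be i (V i)ᶜ = 0 := by
    intro i
    rw [hbe]
    simp only
    rw [Measure.map_apply measurable_snd (hVopen i).measurableSet.compl, hlam]
    simp only [Measure.smul_apply, smul_eq_mul]
    rw [Measure.restrict_apply (measurable_snd (hVopen i).measurableSet.compl)]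
    have : Prod.snd ⁻¹' (V i)ᶜ ∩ S i = ∅ := by
      ext z
      simp only [Set.mem_inter_iff, Set.mem_preimage, Set.mem_compl_iff, hS,
        Set.mem_prod, Set.mem_empty_iff_false, iff_false]
      rintro ⟨h1, _, h2⟩
      exact h1 h2
    rw [this, measure_empty, mul_zero]
  -- the new plan
  set κ : ENNReal := (ε / (k : ENNReal))⁻¹ with hκ
  have hκne : κ ≠ 0 := by simp [hκ, hεkfin]
  have hκfin : κ ≠ ⊤ := by simp [hκ, hεkne]
  have hκmul : κ * (ε / k) = 1 := ENNReal.inv_mul_cancel hεkne hεkfin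
  set nw : Fin k → Measure (X × Y) := fun i => κ • ((al i).prod (be (σ i))) with hnw
  have hproduniv : ∀ i, ((al i).prod (be (σ i))) Set.univ = (ε / k) * (ε / k) := by
    intro i
    haveI := hbesf (σ i)
    have h := Measure.prod_prod (μ := al i) (ν := be (σ i)) Set.univ Set.univ
    rw [Set.univ_prod_univ] at h
    rw [h, haluniv, hbeuniv]
  have hnwuniv : ∀ i, nw i Set.univ = ε / k := by
    intro i
    rw [hnw]
    simp only [Measure.smul_apply, smul_eq_mul]
    rw [hproduniv i, ← mul_assoc, hκmul, one_mul]
  set π' : Measure (X × Y) := (π - lamt) + ∑ i, nw i with hπ'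
  -- marginal computations
  have hmapfst : ∀ i, (nw i).map Prod.fst = al i := by
    intro i
    haveI := hbesf (σ i)
    rw [hnw]
    simp only
    rw [Measure.map_smul, Measure.map_fst_prod, hbeuniv, smul_smul, hκmul, one_smul]
  have hmapsnd : ∀ i, (nw i).map Prod.snd = be (σ i) := by
    intro i
    haveI := hbesf (σ i)
    haveI := halsf i
    rw [hnw]
    simp only
    rw [Measure.map_smul, Measure.map_snd_prod, haluniv, smul_smul, hκmul, one_smul]
  have hsubadd : (π - lamt) + lamt = π := Measure.sub_add_cancel_of_le hlamle
  have hmargfst : π'.map Prod.fst = μ := by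
    rw [hπ', Measure.map_add _ _ measurable_fst, measure_map_finset_sum _ _ measurable_fst]
    have h1 : ∑ i, (nw i).map Prod.fst = lamt.map Prod.fst := by
      rw [hlamt, measure_map_finset_sum _ _ measurable_fst]
      simp only [← hal]
      exact Finset.sum_congr rfl (fun i _ => hmapfst i)
    rw [h1, ← Measure.map_add _ _ measurable_fst, hsubadd, hπ₁]
  have hmargsnd : π'.map Prod.snd = ν := by
    rw [hπ', Measure.map_add _ _ measurable_snd, measure_map_finset_sum _ _ measurable_snd]
    have h1 : ∑ i, (nw i).map Prod.snd = lamt.map Prod.snd := by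
      rw [hlamt, measure_map_finset_sum _ _ measurable_snd]
      simp only [← hbe]
      rw [← Equiv.sum_comp σ (fun j => be j)]
      exact Finset.sum_congr rfl (fun i _ => hmapsnd i)
    rw [h1, ← Measure.map_add _ _ measurable_snd, hsubadd, hπ₂]
  have hπ'prob : IsProbabilityMeasure π' := by
    constructor
    rw [hπ', Measure.add_apply, Measure.sub_apply MeasurableSet.univ hlamle,
      Measure.finset_sum_apply, Measure.finset_sum_apply]
    simp_rw [hnwuniv, hlamuniv]
    simp only [Finset.sum_const, Finset.card_univ, Fintype.card_fin, nsmul_eq_mul]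
    rw [ENNReal.mul_div_cancel hkne hkfin, measure_univ, tsub_add_cancel_of_le hεle1]
  -- cost estimates
  have hlamcost : ∀ i, ENNReal.ofReal (cc i - η) * (ε / k) ≤ ∫⁻ z, f z ∂(lam i) := by
    intro i
    rw [hlam]
    simp only
    rw [lintegral_smul_measure]
    have h1 : ENNReal.ofReal (cc i - η) * m i ≤ ∫⁻ z in S i, f z ∂π := by
      have h2 : ∫⁻ _ in S i, ENNReal.ofReal (cc i - η) ∂π = ENNReal.ofReal (cc i - η) * m i :=
        setLIntegral_const _ _
      rw [← h2]
      refine setLIntegral_mono hfmeas ?_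
      intro z hz
      have hz' : z ∈ U i ×ˢ V i := hz
      exact ENNReal.ofReal_le_ofReal (le_of_lt (hlow' i z.1 hz'.1 z.2 hz'.2))
    calc ENNReal.ofReal (cc i - η) * (ε / k)
        = ce i * (ENNReal.ofReal (cc i - η) * m i) := by
          rw [← hcemul i]; ring
      _ ≤ ce i * ∫⁻ z in S i, f z ∂π := by gcongr
  have hnwcost : ∀ i, ∫⁻ z, f z ∂(nw i) ≤ ENNReal.ofReal (dd i + η) * (ε / k) := by
    intro i
    set T : Set (X × Y) := U i ×ˢ V (σ i) with hT
    have hTmeas : MeasurableSet T := ((hUopen i).prod (hVopen (σ i))).measurableSet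
    have hTnull : nw i Tᶜ = 0 := by
      haveI := hbesf (σ i)
      rw [hnw]
      simp only [Measure.smul_apply, smul_eq_mul]
      have hsub : Tᶜ ⊆ ((U i)ᶜ ×ˢ (Set.univ : Set Y)) ∪ ((Set.univ : Set X) ×ˢ (V (σ i))ᶜ) := by
        intro z hz
        simp only [hT, Set.mem_compl_iff, Set.mem_prod, not_and_or] at hz
        rcases hz with h | h
        · exact Or.inl ⟨h, Set.mem_univ _⟩
        · exact Or.inr ⟨Set.mem_univ _, h⟩
      have h0 : ((al i).prod (be (σ i))) Tᶜ = 0 := by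
        refine le_antisymm ?_ zero_le
        calc ((al i).prod (be (σ i))) Tᶜ
            ≤ ((al i).prod (be (σ i))) (((U i)ᶜ ×ˢ (Set.univ : Set Y)) ∪
                ((Set.univ : Set X) ×ˢ (V (σ i))ᶜ)) := measure_mono hsub
          _ ≤ ((al i).prod (be (σ i))) ((U i)ᶜ ×ˢ (Set.univ : Set Y)) +
              ((al i).prod (be (σ i))) ((Set.univ : Set X) ×ˢ (V (σ i))ᶜ) := measure_union_le _ _
          _ = 0 := by
              rw [Measure.prod_prod, Measure.prod_prod, halnull i, hbenull (σ i)]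
              simp
      rw [h0, mul_zero]
    have hsplit : ∫⁻ z, f z ∂(nw i)
        = ∫⁻ z in T, f z ∂(nw i) + ∫⁻ z in Tᶜ, f z ∂(nw i) :=
      (lintegral_add_compl f hTmeas).symm
    have hzero : ∫⁻ z in Tᶜ, f z ∂(nw i) = 0 := by
      rw [Measure.restrict_eq_zero.mpr hTnull, lintegral_zero_measure]
    rw [hsplit, hzero, add_zero]
    calc ∫⁻ z in T, f z ∂(nw i)
        ≤ ∫⁻ _ in T, ENNReal.ofReal (dd i + η) ∂(nw i) := by
          refine setLIntegral_mono measurable_const ?_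
          intro z hz
          have hz' : z ∈ U i ×ˢ V (σ i) := hz
          exact ENNReal.ofReal_le_ofReal (le_of_lt (hupp' i z.1 hz'.1 z.2 hz'.2))
      _ = ENNReal.ofReal (dd i + η) * nw i T := setLIntegral_const _ _
      _ ≤ ENNReal.ofReal (dd i + η) * nw i Set.univ :=
          mul_le_mul_right (measure_mono (Set.subset_univ T)) _
      _ = ENNReal.ofReal (dd i + η) * (ε / k) := by rw [hnwuniv i]
  -- sum comparison
  have hddnn : ∀ i : Fin k, (0:ℝ) ≤ dd i := fun i => hc_nonneg _ _
  have hccnn : ∀ i : Fin k, (0:ℝ) ≤ cc i := fun i => hc_nonneg _ _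
  have hsumlt : ∑ i, ENNReal.ofReal (dd i + η) < ∑ i, ENNReal.ofReal (cc i - η) := by
    have h1 : ∑ i, ENNReal.ofReal (dd i + η) = ENNReal.ofReal (∑ i, (dd i + η)) :=
      (ENNReal.ofReal_sum_of_nonneg (fun i _ => by linarith [hddnn i])).symm
    have h2 : ENNReal.ofReal (∑ i, (cc i - η)) ≤ ∑ i, ENNReal.ofReal (cc i - η) :=
      ofReal_sum_le _ _
    have h3 : ENNReal.ofReal (∑ i, (dd i + η)) < ENNReal.ofReal (∑ i, (cc i - η)) := by
      have hsum1 : ∑ i, (dd i + η) = ∑ i, dd i + k * η := by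
        rw [Finset.sum_add_distrib, Finset.sum_const, Finset.card_univ, Fintype.card_fin,
          nsmul_eq_mul]
      have hsum2 : ∑ i, (cc i - η) = ∑ i, cc i - k * η := by
        rw [Finset.sum_sub_distrib, Finset.sum_const, Finset.card_univ, Fintype.card_fin,
          nsmul_eq_mul]
      have hkR : (k:ℝ) ≠ 0 := Nat.cast_ne_zero.mpr hk.ne'
      have hkη : (k:ℝ) * η = Δ / 4 := by
        rw [hη]
        field_simp
      have hddsum : (0:ℝ) ≤ ∑ i, dd i := Finset.sum_nonneg (fun i _ => hddnn i)
      rw [hsum1, hsum2]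
      refine (ENNReal.ofReal_lt_ofReal_iff ?_).mpr ?_
      · linarith [hkη, hΔpos, hddsum, hΔ.le, hΔ.ge]
      · linarith [hkη, hΔpos, hddsum, hΔ.le, hΔ.ge]
    rw [h1]
    exact lt_of_lt_of_le h3 h2
  have hcostlt : ∑ i, ∫⁻ z, f z ∂(nw i) < ∑ i, ∫⁻ z, f z ∂(lam i) := by
    calc ∑ i, ∫⁻ z, f z ∂(nw i) ≤ ∑ i, ENNReal.ofReal (dd i + η) * (ε / k) :=
          Finset.sum_le_sum (fun i _ => hnwcost i)
      _ = (∑ i, ENNReal.ofReal (dd i + η)) * (ε / k) := by rw [Finset.sum_mul]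
      _ < (∑ i, ENNReal.ofReal (cc i - η)) * (ε / k) :=
          ENNReal.mul_lt_mul_left hεkne hεkfin hsumlt
      _ = ∑ i, ENNReal.ofReal (cc i - η) * (ε / k) := by rw [Finset.sum_mul]
      _ ≤ ∑ i, ∫⁻ z, f z ∂(lam i) := Finset.sum_le_sum (fun i _ => hlamcost i)
  -- conclude
  have hbase : ∫⁻ z, f z ∂(π - lamt) ≠ ⊤ := by
    have h1 : ∫⁻ z, f z ∂(π - lamt) ≤ ∫⁻ z, f z ∂π :=
      lintegral_mono' Measure.sub_le le_rfl
    exact (lt_of_le_of_lt h1 hfin).ne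
  have hπ'cost : ∫⁻ z, f z ∂π' < ∫⁻ z, f z ∂π := by
    have hold : ∫⁻ z, f z ∂π = ∫⁻ z, f z ∂(π - lamt) + ∑ i, ∫⁻ z, f z ∂(lam i) := by
      conv_lhs => rw [← hsubadd]
      rw [lintegral_add_measure, hlamt, lintegral_finset_sum_measure]
    have hnew : ∫⁻ z, f z ∂π' = ∫⁻ z, f z ∂(π - lamt) + ∑ i, ∫⁻ z, f z ∂(nw i) := by
      rw [hπ', lintegral_add_measure, lintegral_finset_sum_measure]
    rw [hold, hnew]
    exact ENNReal.add_lt_add_left hbase hcostlt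
  have := hopt π' hπ'prob hmargfst hmargsnd
  rw [hf] at hπ'cost
  exact absurd this (not_le.mpr hπ'cost)
end

section
/- For Gaussian measures μ = N(m₁, Σ₁) and ν = N(m₂, Σ₂) on ℝᵈ, the squared Bures–Wasserstein distance BW²(μ,ν) = ½|m₁ - m₂|² + ½Tr(Σ₁ + Σ₂ - 2(Σ₁^{1/2} Σ₂ Σ₁^{1/2})^{1/2}) is nonnegative, and equals 0 if and only if m₁ = m₂ and Σ₁ = Σ₂. -/
open Matrix

section

open scoped ComplexOrder

/-- The positive semidefinite square root, as `Matrix.PosSemidef.sqrt` was defined in the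
older Mathlib (removed since). -/
noncomputable def Matrix.PosSemidef.sqrt {n 𝕜 : Type*} [Fintype n] [DecidableEq n] [RCLike 𝕜]
    {A : Matrix n n 𝕜} (hA : A.PosSemidef) : Matrix n n 𝕜 :=
  hA.1.eigenvectorUnitary.1 * diagonal ((↑) ∘ (√·) ∘ hA.1.eigenvalues) *
    (star hA.1.eigenvectorUnitary : Matrix n n 𝕜)

end

section

open scoped MatrixOrder

lemma Matrix.PosSemidef.sqrt_eq_cfc {m : Type*} [Fintype m] [DecidableEq m]
    {A : Matrix m m ℝ} (hA : A.PosSemidef) : hA.sqrt = CFC.sqrt A := by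
  rw [CFC.sqrt_eq_real_sqrt A hA.nonneg, cfcₙ_eq_cfc (hf0 := by simp), hA.1.cfc_eq]
  rfl

lemma Matrix.PosSemidef.posSemidef_sqrt {m : Type*} [Fintype m] [DecidableEq m]
    {A : Matrix m m ℝ} (hA : A.PosSemidef) : hA.sqrt.PosSemidef := by
  rw [hA.sqrt_eq_cfc]; exact (CFC.sqrt_nonneg A).posSemidef

lemma Matrix.PosSemidef.sqrt_mul_self {m : Type*} [Fintype m] [DecidableEq m]
    {A : Matrix m m ℝ} (hA : A.PosSemidef) : hA.sqrt * hA.sqrt = A := by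
  rw [hA.sqrt_eq_cfc]; exact CFC.sqrt_mul_sqrt_self A hA.nonneg

lemma Matrix.PosSemidef.eq_sqrt_of_sq_eq {m : Type*} [Fintype m] [DecidableEq m]
    {A : Matrix m m ℝ} (hA : A.PosSemidef) (B : Matrix m m ℝ) (hB : B.PosSemidef)
    (hAB : A ^ 2 = B) : A = hB.sqrt := by
  rw [hB.sqrt_eq_cfc]; exact (CFC.sqrt_unique (by rw [← hAB, sq]) hA.nonneg).symm

end

variable {n : Type*} [Fintype n] [DecidableEq n]

lemma tr_sq_nonneg (C : Matrix n n ℝ) : 0 ≤ (Cᵀ * C).trace := by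
  have : (Cᵀ * C).trace = ∑ i, ∑ j, (C j i) ^ 2 := by
    simp [Matrix.trace, Matrix.mul_apply, Matrix.diag, sq]
  rw [this]; positivity

lemma tr_sq_eq_zero {C : Matrix n n ℝ} (h : (Cᵀ * C).trace = 0) : C = 0 := by
  have h2 : (Cᵀ * C).trace = ∑ i, ∑ j, (C j i) ^ 2 := by
    simp [Matrix.trace, Matrix.mul_apply, Matrix.diag, sq]
  rw [h2] at h
  ext j i
  have := (Finset.sum_eq_zero_iff_of_nonneg (by intro i _; positivity)).mp h i (Finset.mem_univ i)
  have := (Finset.sum_eq_zero_iff_of_nonneg (by intro j _; positivity)).mp this j (Finset.mem_univ j)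
  simpa using pow_eq_zero_iff (n := 2) (by norm_num) |>.mp this

lemma bw_core {A B : Matrix n n ℝ} (hA : Aᵀ = A) (hB : Bᵀ = B) (σ : n → ℝ)
    (hX : (B * A)ᵀ * (B * A) = diagonal (fun i => σ i ^ 2)) :
    2 * ∑ i, σ i ≤ (A * A).trace + (B * B).trace ∧
      (2 * ∑ i, σ i = (A * A).trace + (B * B).trace → A * A = B * B) := by
  set X := B * A with hXdef
  set σ' : n → ℝ := fun i => if σ i = 0 then 0 else (σ i)⁻¹ with hσ'
  set ε : n → ℝ := fun i => if σ i = 0 then 0 else 1 with hε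
  set T := X * diagonal σ' with hT
  -- diagonal arithmetic
  have hd1 : diagonal σ' * diagonal σ = diagonal ε := by
    rw [diagonal_mul_diagonal]
    ext k i
    rcases eq_or_ne k i with rfl | hki
    · simp only [diagonal_apply_eq, Pi.mul_apply]
      by_cases h : σ k = 0 <;> simp [hσ', hε, h]
    · simp [diagonal_apply_ne _ hki]
  have hd2 : diagonal σ' * diagonal (fun i => σ i ^ 2) * diagonal σ' = diagonal ε := by
    rw [diagonal_mul_diagonal, diagonal_mul_diagonal]
    ext k i
    rcases eq_or_ne k i with rfl | hki
    · simp only [diagonal_apply_eq, Pi.mul_apply]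
      by_cases h : σ k = 0 <;> simp [hσ', hε, h] <;> field_simp
    · simp [diagonal_apply_ne _ hki]
  have hd3 : diagonal σ' * diagonal ε = diagonal σ' := by
    rw [diagonal_mul_diagonal]
    ext k i
    rcases eq_or_ne k i with rfl | hki
    · simp only [diagonal_apply_eq, Pi.mul_apply]
      by_cases h : σ k = 0 <;> simp [hσ', hε, h]
    · simp [diagonal_apply_ne _ hki]
  have hd4 : diagonal ε * diagonal σ = diagonal (fun i => ε i * σ i) := by
    rw [diagonal_mul_diagonal]
  -- columns of X with σ i = 0 vanish
  have hcol : ∀ i, σ i = 0 → ∀ k, X k i = 0 := by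
    intro i hi k
    have h0 : (Xᵀ * X) i i = 0 := by rw [hX]; simp [hi]
    have h1 : (Xᵀ * X) i i = ∑ k, (X k i) ^ 2 := by simp [Matrix.mul_apply, sq]
    rw [h1] at h0
    have := (Finset.sum_eq_zero_iff_of_nonneg (by intro k _; positivity)).mp h0 k (Finset.mem_univ k)
    simpa using pow_eq_zero_iff (n := 2) (by norm_num) |>.mp this
  have hXε : X * diagonal ε = X := by
    ext k i
    simp only [Matrix.mul_apply, Matrix.diagonal_apply, mul_ite, mul_zero, hε]
    rw [Finset.sum_eq_single i]
    · by_cases h : σ i = 0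
      · simp [h, hcol i h k]
      · simp [h]
    · intro b _ hb; simp [hb]
    · simp
  have hTT : Tᵀ * T = diagonal ε := by
    rw [hT, transpose_mul, diagonal_transpose]
    calc diagonal σ' * Xᵀ * (X * diagonal σ')
        = diagonal σ' * (Xᵀ * X) * diagonal σ' := by simp only [Matrix.mul_assoc]
      _ = diagonal ε := by rw [hX, hd2]
  have hTσ : T * diagonal σ = X := by
    rw [hT, Matrix.mul_assoc, hd1, hXε]
  have hTε : T * diagonal ε = T := by
    rw [hT, Matrix.mul_assoc, hd3]
  have hPP : T * Tᵀ * (T * Tᵀ) = T * Tᵀ := by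
    calc T * Tᵀ * (T * Tᵀ) = T * (Tᵀ * T) * Tᵀ := by
          simp only [Matrix.mul_assoc]
      _ = T * Tᵀ := by rw [hTT, hTε]
  have htrace : (Tᵀ * X).trace = ∑ i, σ i := by
    rw [← hTσ, ← Matrix.mul_assoc, hTT, hd4, trace_diagonal]
    apply Finset.sum_congr rfl
    intro i _
    by_cases h : σ i = 0 <;> simp [hε, h]
  -- the key identity
  have key : (A * A).trace + (B * B).trace - 2 * (Tᵀ * X).trace
      = ((B * T - A)ᵀ * (B * T - A)).trace + (((1 - T * Tᵀ) * B)ᵀ * ((1 - T * Tᵀ) * B)).trace := by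
    have e1 : (B * T - A)ᵀ * (B * T - A)
        = Tᵀ * (B * (B * T)) - Tᵀ * (B * A) - A * (B * T) + A * A := by
      simp only [transpose_sub, transpose_mul, hA, hB, sub_mul, mul_sub, Matrix.mul_assoc]
      abel
    have e2 : ((1 - T * Tᵀ) * B)ᵀ * ((1 - T * Tᵀ) * B) = B * B - B * (T * (Tᵀ * B)) := by
      have h1 : ((1 - T * Tᵀ) * B)ᵀ = B * (1 - T * Tᵀ) := by
        simp [transpose_sub, transpose_mul, hB, Matrix.mul_assoc]
      rw [h1]
      calc B * (1 - T * Tᵀ) * ((1 - T * Tᵀ) * B)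
          = B * ((1 - T * Tᵀ) * (1 - T * Tᵀ)) * B := by simp only [Matrix.mul_assoc]
        _ = B * (1 - T * Tᵀ) * B := by
            congr 2
            simp only [Matrix.mul_sub, Matrix.sub_mul, Matrix.one_mul, Matrix.mul_one, hPP]
            abel
        _ = B * B - B * (T * (Tᵀ * B)) := by
            simp only [Matrix.mul_sub, Matrix.sub_mul, Matrix.mul_one, Matrix.mul_assoc]
    rw [e1, e2]
    have c1 : (A * (B * T)).trace = (Tᵀ * X).trace := by
      rw [← trace_transpose (A * (B * T))]
      simp only [transpose_mul, hA, hB, Matrix.mul_assoc, hXdef]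
    have c2 : (Tᵀ * (B * (B * T))).trace = (B * (T * (Tᵀ * B))).trace := by
      calc (Tᵀ * (B * (B * T))).trace
          = ((B * B) * (T * Tᵀ)).trace := by
            rw [trace_mul_comm]; congr 1; simp only [Matrix.mul_assoc]
        _ = ((T * Tᵀ) * (B * B)).trace := trace_mul_comm _ _
        _ = (B * (T * (Tᵀ * B))).trace := by
            rw [trace_mul_comm B]; congr 1; simp only [Matrix.mul_assoc]
    simp only [trace_add, trace_sub, c1, c2, htrace]
    rw [← hXdef, htrace]; ring
  rw [htrace] at key
  have h1 := tr_sq_nonneg (B * T - A)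
  have h2 := tr_sq_nonneg ((1 - T * Tᵀ) * B)
  constructor
  · linarith
  · intro heq
    have hz1 : ((B * T - A)ᵀ * (B * T - A)).trace = 0 := by linarith
    have hz2 : (((1 - T * Tᵀ) * B)ᵀ * ((1 - T * Tᵀ) * B)).trace = 0 := by linarith
    have hBT : B * T = A := by
      have := tr_sq_eq_zero hz1; rwa [sub_eq_zero] at this
    have hPB : T * (Tᵀ * B) = B := by
      have h0 := tr_sq_eq_zero hz2
      have h1' : B - T * (Tᵀ * B) = 0 := by
        calc B - T * (Tᵀ * B) = (1 - T * Tᵀ) * B := by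
              simp only [Matrix.sub_mul, Matrix.one_mul, Matrix.mul_assoc]
          _ = 0 := h0
      rw [sub_eq_zero] at h1'; exact h1'.symm
    have hA' : Tᵀ * B = A := by
      have h3 := congrArg transpose hBT
      rwa [transpose_mul, hB, hA] at h3
    calc A * A = (B * T) * (Tᵀ * B) := by rw [hBT, hA']
      _ = B * (T * (Tᵀ * B)) := by simp only [Matrix.mul_assoc]
      _ = B * B := by rw [hPB]

lemma real_conjT (C : Matrix n n ℝ) : Cᴴ = Cᵀ := by
  ext i j; simp [Matrix.conjTranspose_apply]

/-- The squared Bures–Wasserstein distance between the Gaussians `N(m₁, Σ₁)` and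
`N(m₂, Σ₂)`:
`BW² = ½‖m₁ - m₂‖² + ½ Tr(Σ₁ + Σ₂ - 2 (Σ₁^{1/2} Σ₂ Σ₁^{1/2})^{1/2})`. -/
noncomputable def buresWassersteinSq {d : ℕ} (m₁ m₂ : EuclideanSpace ℝ (Fin d))
    (S₁ S₂ : Matrix (Fin d) (Fin d) ℝ) (h₁ : S₁.PosSemidef) (h₂ : S₂.PosSemidef) : ℝ :=
  1 / 2 * ‖m₁ - m₂‖ ^ 2 +
    1 / 2 * (S₁ + S₂ - 2 • (h₂.mul_mul_conjTranspose_same h₁.sqrt).sqrt).trace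

/-- The squared Bures–Wasserstein distance is nonnegative, and vanishes iff the two
Gaussians coincide. -/
theorem buresWassersteinSq_nonneg_and_eq_zero_iff {d : ℕ}
    (m₁ m₂ : EuclideanSpace ℝ (Fin d)) (S₁ S₂ : Matrix (Fin d) (Fin d) ℝ)
    (h₁ : S₁.PosSemidef) (h₂ : S₂.PosSemidef) :
    0 ≤ buresWassersteinSq m₁ m₂ S₁ S₂ h₁ h₂ ∧
      (buresWassersteinSq m₁ m₂ S₁ S₂ h₁ h₂ = 0 ↔ m₁ = m₂ ∧ S₁ = S₂) := by
  classical
  set A := h₁.sqrt with hAdef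
  have hApsd : A.PosSemidef := h₁.posSemidef_sqrt
  have hAt : Aᵀ = A := by rw [← real_conjT]; exact hApsd.1
  have hAA : A * A = S₁ := h₁.sqrt_mul_self
  set B := h₂.sqrt with hBdef
  have hBpsd : B.PosSemidef := h₂.posSemidef_sqrt
  have hBt : Bᵀ = B := by rw [← real_conjT]; exact hBpsd.1
  have hBB : B * B = S₂ := h₂.sqrt_mul_self
  set hXpsd := h₂.mul_mul_conjTranspose_same h₁.sqrt with hXpsddef
  set M := hXpsd.sqrt with hMdef
  have hMpsd : M.PosSemidef := hXpsd.posSemidef_sqrt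
  have hMM : M * M = A * S₂ * Aᴴ := hXpsd.sqrt_mul_self
  -- spectral decomposition of M
  set V : Matrix (Fin d) (Fin d) ℝ := (Matrix.IsHermitian.eigenvectorUnitary hMpsd.1 :) with hVdef
  set σ : Fin d → ℝ := hMpsd.1.eigenvalues with hσdef
  have hV1 : star V * V = 1 := Matrix.mem_unitaryGroup_iff'.mp
    (Matrix.IsHermitian.eigenvectorUnitary hMpsd.1).2
  have hV2 : V * star V = 1 := Matrix.mem_unitaryGroup_iff.mp
    (Matrix.IsHermitian.eigenvectorUnitary hMpsd.1).2
  have hsV : star V = Vᵀ := by rw [Matrix.star_eq_conjTranspose, real_conjT]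
  rw [hsV] at hV1 hV2
  have hdiag : Vᵀ * M * V = diagonal σ := by
    have := (Unitary.conjStarAlgAut_star_apply (S := ℝ) _ _).symm.trans hMpsd.1.conjStarAlgAut_star_eigenvectorUnitary
    rw [hsV] at this
    convert this using 2
    all_goals rfl
  -- transformed matrices
  set A' := Vᵀ * A * V with hA'def
  set B' := Vᵀ * B * V with hB'def
  have hA't : A'ᵀ = A' := by
    simp [hA'def, transpose_mul, hAt, Matrix.mul_assoc]
  have hB't : B'ᵀ = B' := by
    simp [hB'def, transpose_mul, hBt, Matrix.mul_assoc]
  have hBA' : B' * A' = Vᵀ * (B * A) * V := by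
    calc B' * A' = Vᵀ * B * (V * Vᵀ) * A * V := by
          simp only [hA'def, hB'def, Matrix.mul_assoc]
      _ = Vᵀ * (B * A) * V := by rw [hV2]; simp only [Matrix.mul_one, Matrix.mul_assoc]
  have hBABA : (B * A)ᵀ * (B * A) = M * M := by
    rw [hMM, transpose_mul, hAt, hBt, real_conjT, hAt, ← hBB]
    simp only [Matrix.mul_assoc]
  have hX' : (B' * A')ᵀ * (B' * A') = diagonal (fun i => σ i ^ 2) := by
    rw [hBA']
    calc (Vᵀ * (B * A) * V)ᵀ * (Vᵀ * (B * A) * V)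
        = Vᵀ * (B * A)ᵀ * (V * Vᵀ) * (B * A) * V := by
          simp only [transpose_mul, transpose_transpose, Matrix.mul_assoc]
      _ = Vᵀ * ((B * A)ᵀ * (B * A)) * V := by
          rw [hV2]; simp only [Matrix.mul_one, Matrix.mul_assoc]
      _ = Vᵀ * (M * M) * V := by rw [hBABA]
      _ = (Vᵀ * M * V) * (Vᵀ * M * V) := by
          calc Vᵀ * (M * M) * V = Vᵀ * M * (V * Vᵀ) * M * V := by
                rw [hV2]; simp only [Matrix.mul_one, Matrix.mul_assoc]
            _ = (Vᵀ * M * V) * (Vᵀ * M * V) := by simp only [Matrix.mul_assoc]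
      _ = diagonal (fun i => σ i ^ 2) := by
          rw [hdiag, diagonal_mul_diagonal]
          congr 1; funext i; simp [sq]
  -- traces
  have htrA' : (A' * A').trace = S₁.trace := by
    calc (A' * A').trace = (Vᵀ * A * (V * Vᵀ) * A * V).trace := by
          simp only [hA'def, Matrix.mul_assoc]
      _ = (Vᵀ * (S₁ * V)).trace := by
          rw [hV2]; simp only [Matrix.mul_one, ← hAA, Matrix.mul_assoc]
      _ = ((S₁ * V) * Vᵀ).trace := trace_mul_comm _ _
      _ = S₁.trace := by rw [Matrix.mul_assoc, hV2, Matrix.mul_one]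
  have htrB' : (B' * B').trace = S₂.trace := by
    calc (B' * B').trace = (Vᵀ * B * (V * Vᵀ) * B * V).trace := by
          simp only [hB'def, Matrix.mul_assoc]
      _ = (Vᵀ * (S₂ * V)).trace := by
          rw [hV2]; simp only [Matrix.mul_one, ← hBB, Matrix.mul_assoc]
      _ = ((S₂ * V) * Vᵀ).trace := trace_mul_comm _ _
      _ = S₂.trace := by rw [Matrix.mul_assoc, hV2, Matrix.mul_one]
  have htrM : M.trace = ∑ i, σ i := by
    calc M.trace = (M * (V * Vᵀ)).trace := by rw [hV2, Matrix.mul_one]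
      _ = ((M * V) * Vᵀ).trace := by rw [Matrix.mul_assoc]
      _ = (Vᵀ * (M * V)).trace := (trace_mul_comm _ _).symm
      _ = (diagonal σ).trace := by rw [← Matrix.mul_assoc, hdiag]
      _ = ∑ i, σ i := trace_diagonal σ
  obtain ⟨hineq, heqcase⟩ := bw_core hA't hB't σ hX'
  rw [htrA', htrB'] at hineq heqcase
  -- the trace part of BW²
  have htr : (S₁ + S₂ - 2 • M).trace = S₁.trace + S₂.trace - 2 * M.trace := by
    rw [trace_sub, trace_add, trace_smul]
    simp [two_smul]; ring
  have htr_nonneg : 0 ≤ (S₁ + S₂ - 2 • M).trace := by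
    rw [htr, htrM] at *
    linarith
  have hnorm_nonneg : (0:ℝ) ≤ 1 / 2 * ‖m₁ - m₂‖ ^ 2 := by positivity
  have hBW : buresWassersteinSq m₁ m₂ S₁ S₂ h₁ h₂
      = 1 / 2 * ‖m₁ - m₂‖ ^ 2 + 1 / 2 * (S₁ + S₂ - 2 • M).trace := rfl
  refine ⟨by rw [hBW]; positivity, ?_, ?_⟩
  · -- zero implies equal
    intro h0
    rw [hBW] at h0
    have hm : ‖m₁ - m₂‖ ^ 2 = 0 := by nlinarith
    have hm' : m₁ = m₂ := by
      rw [pow_eq_zero_iff (n := 2) (by norm_num), norm_eq_zero, sub_eq_zero] at hm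
      exact hm
    refine ⟨hm', ?_⟩
    have htr0 : S₁.trace + S₂.trace = 2 * M.trace := by
      rw [hm'] at h0
      simp only [sub_self, norm_zero] at h0
      rw [htr] at h0
      nlinarith
    have := heqcase (by rw [htrM] at htr0; linarith)
    -- A' * A' = B' * B'  ⇒  S₁ = S₂
    have hconj : Vᵀ * S₁ * V = Vᵀ * S₂ * V := by
      calc Vᵀ * S₁ * V = A' * A' := by
            rw [← hAA, hA'def]
            calc Vᵀ * (A * A) * V = Vᵀ * A * (V * Vᵀ) * A * V := by
                  rw [hV2]; simp only [Matrix.mul_one, Matrix.mul_assoc]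
              _ = Vᵀ * A * V * (Vᵀ * A * V) := by simp only [Matrix.mul_assoc]
        _ = B' * B' := this
        _ = Vᵀ * S₂ * V := by
            rw [← hBB, hB'def]
            calc Vᵀ * B * V * (Vᵀ * B * V) = Vᵀ * B * (V * Vᵀ) * B * V := by
                  simp only [Matrix.mul_assoc]
              _ = Vᵀ * (B * B) * V := by rw [hV2]; simp only [Matrix.mul_one, Matrix.mul_assoc]
    have hcancel : ∀ C : Matrix (Fin d) (Fin d) ℝ, V * (Vᵀ * C * V) * Vᵀ = C := by
      intro C
      calc V * (Vᵀ * C * V) * Vᵀ = V * Vᵀ * C * (V * Vᵀ) := by simp only [Matrix.mul_assoc]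
        _ = C := by rw [hV2]; simp only [Matrix.one_mul, Matrix.mul_one, hV2]
    calc S₁ = V * (Vᵀ * S₁ * V) * Vᵀ := (hcancel S₁).symm
      _ = V * (Vᵀ * S₂ * V) * Vᵀ := by rw [hconj]
      _ = S₂ := hcancel S₂
  · -- equal implies zero
    rintro ⟨hm, hS⟩
    subst hS hm
    have hMS : M = S₁ := by
      symm
      apply h₁.eq_sqrt_of_sq_eq
      show S₁ ^ 2 = A * S₁ * Aᴴ
      calc S₁ ^ 2 = S₁ * S₁ := sq S₁
        _ = A * A * (A * A) := by rw [hAA]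
        _ = A * (A * A) * Aᴴ := by
            rw [real_conjT A, hAt]; simp only [Matrix.mul_assoc]
        _ = A * S₁ * Aᴴ := by rw [hAA]
    have hzero : S₁ + S₁ - 2 • S₁ = 0 := by rw [two_smul]; abel
    rw [hBW, hMS, hzero]
    simp
end

section
/- For one-dimensional Gaussians, W₂²(N(m₁,σ₁²), N(m₂,σ₂²)) = (m₁ - m₂)² + (σ₁ - σ₂)². -/
open MeasureTheory ProbabilityTheory ENNReal NNReal

/-- The squared `2`-Wasserstein distance between measures on `ℝ`, as an infimum over
couplings of the quadratic transport cost. -/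
noncomputable def w2sq (μ ν : Measure ℝ) : ℝ≥0∞ :=
  ⨅ π ∈ {π : Measure (ℝ × ℝ) | π.map Prod.fst = μ ∧ π.map Prod.snd = ν},
    ∫⁻ z, ENNReal.ofReal ((z.1 - z.2) ^ 2) ∂π

section Aux

open Real

namespace W2Gauss

lemma integrable_pow_mul_gauss (n : ℕ) :
    Integrable (fun x : ℝ => x ^ n * rexp (-(2⁻¹ : ℝ) * x ^ 2)) := by
  have h := integrable_rpow_mul_exp_neg_mul_sq (b := (2⁻¹ : ℝ)) (by norm_num)
    (s := (n : ℝ)) (lt_of_lt_of_le neg_one_lt_zero (Nat.cast_nonneg n))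
  simpa [Real.rpow_natCast] using h

lemma integral_mul_gauss_odd :
    ∫ x : ℝ, x * rexp (-(2⁻¹ : ℝ) * x ^ 2) = 0 := by
  have h := integral_neg_eq_self (fun y : ℝ => y * rexp (-(2⁻¹ : ℝ) * y ^ 2)) volume
  simp only [neg_sq, neg_mul] at h
  rw [integral_neg] at h
  simp only [neg_mul] at h ⊢
  linarith

lemma integral_sq_mul_gauss :
    ∫ x : ℝ, x ^ 2 * rexp (-(2⁻¹ : ℝ) * x ^ 2) = Real.sqrt (2 * π) := by
  have habs : ∫ x : ℝ, (fun y : ℝ => y ^ 2 * rexp (-(2⁻¹ : ℝ) * y ^ 2)) |x|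
      = 2 * ∫ x in Set.Ioi (0 : ℝ), x ^ 2 * rexp (-(2⁻¹ : ℝ) * x ^ 2) :=
    integral_comp_abs (f := fun y : ℝ => y ^ 2 * rexp (-(2⁻¹ : ℝ) * y ^ 2))
  simp only [sq_abs] at habs
  rw [habs]
  have h2 : ∫ x in Set.Ioi (0 : ℝ), x ^ 2 * rexp (-(2⁻¹ : ℝ) * x ^ 2)
      = (2⁻¹ : ℝ) ^ (-(((2:ℝ) + 1)) / 2) * (1 / 2) * Real.Gamma (((2:ℝ) + 1) / 2) := by
    have h := integral_rpow_mul_exp_neg_mul_rpow (p := (2:ℝ)) (q := (2:ℝ)) (b := (2⁻¹:ℝ))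
      (by norm_num) (by norm_num) (by norm_num)
    rw [← h]
    refine setIntegral_congr_fun measurableSet_Ioi (fun x hx => ?_)
    simp only [Real.rpow_two]
  rw [h2]
  have hgamma : Real.Gamma (((2:ℝ) + 1) / 2) = Real.sqrt π / 2 := by
    have : ((2:ℝ) + 1) / 2 = 1 / 2 + 1 := by norm_num
    rw [this, Real.Gamma_add_one (by norm_num), Real.Gamma_one_half_eq]
    ring
  have hrpow : (2⁻¹ : ℝ) ^ (-(((2:ℝ) + 1)) / 2) = 2 * Real.sqrt 2 := by
    rw [show (-(((2:ℝ) + 1)) / 2) = -(3/2 : ℝ) by norm_num]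
    rw [Real.inv_rpow (by norm_num), Real.rpow_neg (by norm_num), inv_inv]
    rw [show (3/2 : ℝ) = 1 + 1/2 by norm_num, Real.rpow_add (by norm_num), Real.rpow_one]
    rw [← Real.sqrt_eq_rpow]
  rw [hgamma, hrpow, Real.sqrt_mul (by norm_num)]
  ring


lemma gaussianPDFReal_std (x : ℝ) :
    gaussianPDFReal 0 1 x = (Real.sqrt (2 * π))⁻¹ * rexp (-(2⁻¹ : ℝ) * x ^ 2) := by
  simp only [gaussianPDFReal, NNReal.coe_one, mul_one, sub_zero]
  congr 1
  field_simp

lemma integral_gaussianReal_std (g : ℝ → ℝ) :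
    ∫ x, g x ∂(gaussianReal 0 1) = ∫ x, gaussianPDFReal 0 1 x * g x := by
  rw [gaussianReal_of_var_ne_zero _ one_ne_zero]
  have : gaussianPDF 0 1 = fun x => ((gaussianPDFReal 0 1 x).toNNReal : ℝ≥0∞) := rfl
  rw [this, integral_withDensity_eq_integral_smul
    ((measurable_gaussianPDFReal 0 1).real_toNNReal) g]
  congr 1
  ext x
  simp [NNReal.smul_def, Real.coe_toNNReal _ (gaussianPDFReal_nonneg 0 1 x)]

lemma integrable_gaussianReal_std (g : ℝ → ℝ)
    (h : Integrable (fun x => gaussianPDFReal 0 1 x * g x)) :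
    Integrable g (gaussianReal 0 1) := by
  rw [gaussianReal_of_var_ne_zero _ one_ne_zero]
  have hd : gaussianPDF 0 1 = fun x => ((gaussianPDFReal 0 1 x).toNNReal : ℝ≥0∞) := rfl
  rw [hd, integrable_withDensity_iff_integrable_coe_smul
    ((measurable_gaussianPDFReal 0 1).real_toNNReal)]
  refine h.congr (Filter.Eventually.of_forall fun x => ?_)
  simp [NNReal.smul_def, Real.coe_toNNReal _ (gaussianPDFReal_nonneg 0 1 x)]

lemma integrable_pow_gaussianReal_std (n : ℕ) :
    Integrable (fun x => x ^ n) (gaussianReal 0 1) := by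
  refine integrable_gaussianReal_std _ ?_
  have := (integrable_pow_mul_gauss n).const_mul (Real.sqrt (2 * π))⁻¹
  refine this.congr (Filter.Eventually.of_forall fun x => ?_)
  simp only [gaussianPDFReal_std]
  ring

lemma integral_id_gaussianReal_std : ∫ x, x ∂(gaussianReal 0 1) = 0 := by
  rw [integral_gaussianReal_std]
  have : ∀ x : ℝ, gaussianPDFReal 0 1 x * x
      = (Real.sqrt (2 * π))⁻¹ * (x * rexp (-(2⁻¹ : ℝ) * x ^ 2)) := by
    intro x; rw [gaussianPDFReal_std]; ring
  simp_rw [this]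
  rw [MeasureTheory.integral_const_mul, integral_mul_gauss_odd, mul_zero]

lemma integral_sq_gaussianReal_std : ∫ x, x ^ 2 ∂(gaussianReal 0 1) = 1 := by
  rw [integral_gaussianReal_std]
  have : ∀ x : ℝ, gaussianPDFReal 0 1 x * x ^ 2
      = (Real.sqrt (2 * π))⁻¹ * (x ^ 2 * rexp (-(2⁻¹ : ℝ) * x ^ 2)) := by
    intro x; rw [gaussianPDFReal_std]; ring
  simp_rw [this]
  rw [MeasureTheory.integral_const_mul, integral_sq_mul_gauss]
  rw [inv_mul_cancel₀]
  positivity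


lemma gaussianReal_eq_map (m : ℝ) (σ : ℝ≥0) :
    gaussianReal m (σ ^ 2) = (gaussianReal 0 1).map (fun x => (σ : ℝ) * x + m) := by
  have hcomp : (fun x : ℝ => (σ : ℝ) * x + m) = (fun x => x + m) ∘ (fun x => (σ : ℝ) * x) := rfl
  rw [hcomp, ← Measure.map_map (measurable_add_const m) (measurable_const_mul _)]
  rw [show (fun x : ℝ => (σ : ℝ) * x) = ((σ : ℝ) * ·) from rfl, gaussianReal_map_const_mul]
  rw [show (fun x : ℝ => x + m) = (· + m) from rfl, gaussianReal_map_add_const]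
  congr 1
  · simp
  · ext
    simp [NNReal.coe_pow]

lemma integrable_affine_sq (a b : ℝ) :
    Integrable (fun x => (a * x + b) ^ 2) (gaussianReal 0 1) := by
  have h2 := (integrable_pow_gaussianReal_std 2).const_mul (a ^ 2)
  have h1 := (integrable_pow_gaussianReal_std 1).const_mul (2 * a * b)
  have h0 := (integrable_pow_gaussianReal_std 0).const_mul (b ^ 2)
  refine ((h2.add h1).add h0).congr (Filter.Eventually.of_forall fun x => ?_)
  simp only [Pi.add_apply, pow_one, pow_zero, mul_one]
  ring

lemma integral_affine_sq (a b : ℝ) :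
    ∫ x, (a * x + b) ^ 2 ∂(gaussianReal 0 1) = a ^ 2 + b ^ 2 := by
  have h2 := (integrable_pow_gaussianReal_std 2).const_mul (a ^ 2)
  have h1 := (integrable_pow_gaussianReal_std 1).const_mul (2 * a * b)
  have h0 := (integrable_pow_gaussianReal_std 0).const_mul (b ^ 2)
  have hcongr : ∀ x : ℝ, (a * x + b) ^ 2
      = a ^ 2 * x ^ 2 + 2 * a * b * x ^ 1 + b ^ 2 * x ^ 0 := by intro x; ring
  simp_rw [hcongr]
  have h21 : Integrable (fun x => a ^ 2 * x ^ 2 + 2 * a * b * x ^ 1) (gaussianReal 0 1) :=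
    h2.add h1
  rw [integral_add h21 h0, integral_add h2 h1, integral_const_mul,
    integral_const_mul, integral_const_mul]
  simp only [pow_one, pow_zero]
  rw [integral_sq_gaussianReal_std, integral_id_gaussianReal_std]
  simp

/-- general gaussian: integrability of identity -/
lemma integrable_id_gaussianReal (m : ℝ) (σ : ℝ≥0) :
    Integrable (fun x => x) (gaussianReal m (σ ^ 2)) := by
  rw [gaussianReal_eq_map m σ]
  rw [integrable_map_measure (g := fun x => x) measurable_id'.aestronglyMeasurable
    ((measurable_const_mul _).add_const m).aemeasurable]
  have h1 := (integrable_pow_gaussianReal_std 1).const_mul (σ : ℝ)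
  have h0 := (integrable_pow_gaussianReal_std 0).const_mul m
  refine (h1.add h0).congr (Filter.Eventually.of_forall fun x => ?_)
  simp [Function.comp]

lemma integrable_sq_sub_gaussianReal (m : ℝ) (σ : ℝ≥0) (c : ℝ) :
    Integrable (fun x => (x - c) ^ 2) (gaussianReal m (σ ^ 2)) := by
  rw [gaussianReal_eq_map m σ]
  rw [integrable_map_measure (g := fun x => (x - c) ^ 2)
    (((measurable_id'.sub_const c).pow_const 2).aestronglyMeasurable)
    ((measurable_const_mul _).add_const m).aemeasurable]
  refine (integrable_affine_sq (σ : ℝ) (m - c)).congr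
    (Filter.Eventually.of_forall fun x => ?_)
  simp only [Function.comp]
  ring_nf

lemma integral_id_gaussianReal (m : ℝ) (σ : ℝ≥0) :
    ∫ x, x ∂(gaussianReal m (σ ^ 2)) = m := by
  rw [gaussianReal_eq_map m σ]
  rw [integral_map (f := fun x => x) ((measurable_const_mul _).add_const m).aemeasurable
    measurable_id'.aestronglyMeasurable]
  have h1 := (integrable_pow_gaussianReal_std 1).const_mul (σ : ℝ)
  have h0 := (integrable_pow_gaussianReal_std 0).const_mul m

  have : ∀ x : ℝ, (σ : ℝ) * x + m = (σ : ℝ) * x ^ 1 + m * x ^ 0 := by intro x; ring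
  simp_rw [this]
  rw [integral_add h1 h0, integral_const_mul, integral_const_mul]
  simp only [pow_one, pow_zero]
  rw [integral_id_gaussianReal_std]
  simp

lemma integral_sq_sub_gaussianReal (m : ℝ) (σ : ℝ≥0) :
    ∫ x, (x - m) ^ 2 ∂(gaussianReal m (σ ^ 2)) = (σ : ℝ) ^ 2 := by
  rw [gaussianReal_eq_map m σ]
  rw [integral_map (f := fun x => (x - m) ^ 2)
    ((measurable_const_mul _).add_const m).aemeasurable
    (((measurable_id'.sub_const m).pow_const 2).aestronglyMeasurable)]
  have : ∀ x : ℝ, ((σ : ℝ) * x + m - m) ^ 2 = ((σ : ℝ) * x + 0) ^ 2 := by intro x; ring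
  simp_rw [this]
  rw [integral_affine_sq]
  simp


lemma cost_lower_bound (m₁ m₂ : ℝ) (σ₁ σ₂ : ℝ≥0) (P : Measure (ℝ × ℝ))
    (h1 : P.map Prod.fst = gaussianReal m₁ (σ₁ ^ 2))
    (h2 : P.map Prod.snd = gaussianReal m₂ (σ₂ ^ 2)) :
    ENNReal.ofReal ((m₁ - m₂) ^ 2 + ((σ₁ : ℝ) - (σ₂ : ℝ)) ^ 2)
      ≤ ∫⁻ z, ENNReal.ofReal ((z.1 - z.2) ^ 2) ∂P := by
  by_cases hfin : ∫⁻ z, ENNReal.ofReal ((z.1 - z.2) ^ 2) ∂P = ⊤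
  · simp [hfin]
  -- P is a probability measure
  haveI hprob : IsProbabilityMeasure P := by
    constructor
    have : P.map Prod.fst Set.univ = P Set.univ :=
      Measure.map_apply measurable_fst MeasurableSet.univ
    rw [← this, h1, measure_univ]
  -- integrability of the cost
  have hmeas : Measurable (fun z : ℝ × ℝ => (z.1 - z.2) ^ 2) :=
    (measurable_fst.sub measurable_snd).pow_const 2
  have hnn : (0 : ℝ × ℝ → ℝ) ≤ᵐ[P] fun z => (z.1 - z.2) ^ 2 :=
    Filter.Eventually.of_forall fun z => sq_nonneg _
  have hcost : Integrable (fun z : ℝ × ℝ => (z.1 - z.2) ^ 2) P :=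
    ⟨hmeas.aestronglyMeasurable, (hasFiniteIntegral_iff_ofReal hnn).mpr (lt_top_iff_ne_top.mpr hfin)⟩
  -- integrability of coordinate functions
  have hu2 : Integrable (fun z : ℝ × ℝ => (z.1 - m₁) ^ 2) P := by
    have h := integrable_sq_sub_gaussianReal m₁ σ₁ m₁
    rw [← h1, integrable_map_measure
      (((measurable_id'.sub_const m₁).pow_const 2).aestronglyMeasurable)
      measurable_fst.aemeasurable] at h
    exact h
  have hv2 : Integrable (fun z : ℝ × ℝ => (z.2 - m₂) ^ 2) P := by
    have h := integrable_sq_sub_gaussianReal m₂ σ₂ m₂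
    rw [← h2, integrable_map_measure
      (((measurable_id'.sub_const m₂).pow_const 2).aestronglyMeasurable)
      measurable_snd.aemeasurable] at h
    exact h
  have hu1 : Integrable (fun z : ℝ × ℝ => z.1) P := by
    have h := integrable_id_gaussianReal m₁ σ₁
    rw [← h1, integrable_map_measure measurable_id'.aestronglyMeasurable
      measurable_fst.aemeasurable] at h
    exact h
  have hv1 : Integrable (fun z : ℝ × ℝ => z.2) P := by
    have h := integrable_id_gaussianReal m₂ σ₂
    rw [← h2, integrable_map_measure measurable_id'.aestronglyMeasurable
      measurable_snd.aemeasurable] at h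
    exact h
  have hu : Integrable (fun z : ℝ × ℝ => z.1 - m₁) P := hu1.sub (integrable_const m₁)
  have hv : Integrable (fun z : ℝ × ℝ => z.2 - m₂) P := hv1.sub (integrable_const m₂)
  have huv : Integrable (fun z : ℝ × ℝ => (z.1 - m₁) * (z.2 - m₂)) P := by
    refine (hu2.add hv2).mono
      ((measurable_fst.sub_const m₁).mul (measurable_snd.sub_const m₂)).aestronglyMeasurable
      (Filter.Eventually.of_forall fun z => ?_)
    simp only [Pi.add_apply, norm_mul, Real.norm_eq_abs]
    rw [abs_of_nonneg (by positivity : (0:ℝ) ≤ (z.1 - m₁) ^ 2 + (z.2 - m₂) ^ 2)]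
    cases' abs_cases (z.1 - m₁) with h h <;> cases' abs_cases (z.2 - m₂) with h' h' <;>
      nlinarith [sq_nonneg (z.1 - m₁ + (z.2 - m₂)), sq_nonneg (z.1 - m₁ - (z.2 - m₂))]
  -- values of the integrals
  have hEu1 : ∫ z, z.1 ∂P = m₁ := by
    have h := integral_id_gaussianReal m₁ σ₁
    rw [← h1, integral_map (f := fun x => x) measurable_fst.aemeasurable
      measurable_id'.aestronglyMeasurable] at h
    exact h
  have hEv1 : ∫ z, z.2 ∂P = m₂ := by
    have h := integral_id_gaussianReal m₂ σ₂
    rw [← h2, integral_map (f := fun x => x) measurable_snd.aemeasurable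
      measurable_id'.aestronglyMeasurable] at h
    exact h
  have hEu2 : ∫ z, (z.1 - m₁) ^ 2 ∂P = (σ₁ : ℝ) ^ 2 := by
    have h := integral_sq_sub_gaussianReal m₁ σ₁
    rw [← h1, integral_map (f := fun x => (x - m₁) ^ 2) measurable_fst.aemeasurable
      (((measurable_id'.sub_const m₁).pow_const 2).aestronglyMeasurable)] at h
    exact h
  have hEv2 : ∫ z, (z.2 - m₂) ^ 2 ∂P = (σ₂ : ℝ) ^ 2 := by
    have h := integral_sq_sub_gaussianReal m₂ σ₂
    rw [← h2, integral_map (f := fun x => (x - m₂) ^ 2) measurable_snd.aemeasurable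
      (((measurable_id'.sub_const m₂).pow_const 2).aestronglyMeasurable)] at h
    exact h
  set t : ℝ := ∫ z, (z.1 - m₁) * (z.2 - m₂) ∂P with ht
  -- Cauchy-Schwarz-type bound on the cross term
  have hkey : ∀ ε : ℝ, 0 < ε → t ≤ ((σ₁ : ℝ) + ε) * ((σ₂ : ℝ) + ε) := by
    intro ε hε
    have hs1 : (0:ℝ) ≤ σ₁ := σ₁.coe_nonneg
    have hs2 : (0:ℝ) ≤ σ₂ := σ₂.coe_nonneg
    set c : ℝ := ((σ₂ : ℝ) + ε) / ((σ₁ : ℝ) + ε) with hc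
    have hcpos : 0 < c := div_pos (by positivity) (by positivity)
    have hint : ∫ z, 2 * c * ((z.1 - m₁) * (z.2 - m₂)) ∂P
        ≤ ∫ z, (c ^ 2 * (z.1 - m₁) ^ 2 + (z.2 - m₂) ^ 2) ∂P := by
      refine integral_mono (huv.const_mul _) ((hu2.const_mul _).add hv2)
        fun z => ?_
      nlinarith [sq_nonneg (c * (z.1 - m₁) - (z.2 - m₂))]
    rw [integral_const_mul] at hint
    have hrhs : ∫ z, (c ^ 2 * (z.1 - m₁) ^ 2 + (z.2 - m₂) ^ 2) ∂P
        = c ^ 2 * (σ₁ : ℝ) ^ 2 + (σ₂ : ℝ) ^ 2 := by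
      rw [integral_add (hu2.const_mul _) hv2, integral_const_mul, hEu2, hEv2]
    rw [hrhs, ← ht] at hint
    have h1c : c * ((σ₁ : ℝ) + ε) = (σ₂ : ℝ) + ε := by
      rw [hc, div_mul_cancel₀]
      positivity
    have hsq : (σ₁ : ℝ) ^ 2 ≤ ((σ₁ : ℝ) + ε) ^ 2 := by nlinarith
    have hbound : c ^ 2 * (σ₁ : ℝ) ^ 2 ≤ c ^ 2 * ((σ₁ : ℝ) + ε) ^ 2 :=
      mul_le_mul_of_nonneg_left hsq (sq_nonneg c)
    have hc2 : c ^ 2 * ((σ₁ : ℝ) + ε) ^ 2 = ((σ₂ : ℝ) + ε) ^ 2 := by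
      rw [← mul_pow, h1c]
    nlinarith [mul_pos hcpos hε]
  have htle : t ≤ (σ₁ : ℝ) * (σ₂ : ℝ) := by
    have hT : Filter.Tendsto (fun ε : ℝ => ((σ₁ : ℝ) + ε) * ((σ₂ : ℝ) + ε))
        (nhdsWithin 0 (Set.Ioi 0)) (nhds ((σ₁ : ℝ) * (σ₂ : ℝ))) := by
      have hcont : Continuous (fun ε : ℝ => ((σ₁ : ℝ) + ε) * ((σ₂ : ℝ) + ε)) := by
        continuity
      have := hcont.tendsto 0
      simp only [add_zero] at this
      exact this.mono_left nhdsWithin_le_nhds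
    refine ge_of_tendsto hT ?_
    filter_upwards [self_mem_nhdsWithin] with ε hε using hkey ε hε
  -- expand the cost
  have hexp : ∫ z, (z.1 - z.2) ^ 2 ∂P
      = (σ₁ : ℝ) ^ 2 + (σ₂ : ℝ) ^ 2 + (m₁ - m₂) ^ 2 - 2 * t
        + 2 * (m₁ - m₂) * (∫ z, (z.1 - m₁) ∂P) - 2 * (m₁ - m₂) * (∫ z, (z.2 - m₂) ∂P) := by
    have hpt : (fun z : ℝ × ℝ => (z.1 - z.2) ^ 2)
        = fun z => ((((z.1 - m₁) ^ 2 + (z.2 - m₂) ^ 2) + ((m₁ - m₂) ^ 2 + (-2) * ((z.1 - m₁) * (z.2 - m₂)))) + ((2 * (m₁ - m₂)) * (z.1 - m₁) + (-(2 * (m₁ - m₂))) * (z.2 - m₂))) := by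
      ext z; ring
    rw [hpt]
    have i1 : Integrable (fun z : ℝ × ℝ => (z.1 - m₁) ^ 2 + (z.2 - m₂) ^ 2) P := hu2.add hv2
    have i2 : Integrable (fun z : ℝ × ℝ => (m₁ - m₂) ^ 2 + (-2) * ((z.1 - m₁) * (z.2 - m₂))) P :=
      (integrable_const _).add (huv.const_mul _)
    have i3 : Integrable (fun z : ℝ × ℝ => ((z.1 - m₁) ^ 2 + (z.2 - m₂) ^ 2) + ((m₁ - m₂) ^ 2 + (-2) * ((z.1 - m₁) * (z.2 - m₂)))) P := i1.add i2
    have i4 : Integrable (fun z : ℝ × ℝ => (2 * (m₁ - m₂)) * (z.1 - m₁) + (-(2 * (m₁ - m₂))) * (z.2 - m₂)) P := (hu.const_mul _).add (hv.const_mul _)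
    rw [integral_add i3 i4, integral_add i1 i2, integral_add hu2 hv2,
      integral_add (integrable_const _) (huv.const_mul _),
      integral_add (hu.const_mul _) (hv.const_mul _),
      integral_const_mul, integral_const_mul, integral_const_mul,
      integral_const, hEu2, hEv2, ← ht]
    simp only [measure_univ, probReal_univ, ENNReal.toReal_one, smul_eq_mul, one_mul]
    ring
  have hEu0 : ∫ z, (z.1 - m₁) ∂P = 0 := by
    rw [integral_sub hu1 (integrable_const m₁), hEu1, integral_const]
    simp
  have hEv0 : ∫ z, (z.2 - m₂) ∂P = 0 := by
    rw [integral_sub hv1 (integrable_const m₂), hEv1, integral_const]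
    simp
  rw [hEu0, hEv0] at hexp
  rw [← ofReal_integral_eq_lintegral_ofReal hcost hnn]
  apply ENNReal.ofReal_le_ofReal
  rw [hexp]
  nlinarith [htle]


lemma coupling_cost (m₁ m₂ : ℝ) (σ₁ σ₂ : ℝ≥0) :
    ∫⁻ z, ENNReal.ofReal ((z.1 - z.2) ^ 2)
        ∂((gaussianReal 0 1).map (fun x => ((σ₁ : ℝ) * x + m₁, (σ₂ : ℝ) * x + m₂)))
      = ENNReal.ofReal ((m₁ - m₂) ^ 2 + ((σ₁ : ℝ) - (σ₂ : ℝ)) ^ 2) := by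
  have hfm : Measurable (fun x : ℝ => ((σ₁ : ℝ) * x + m₁, (σ₂ : ℝ) * x + m₂)) :=
    (((measurable_const_mul _).add_const m₁)).prodMk
      (((measurable_const_mul _).add_const m₂))
  have hgm : Measurable (fun z : ℝ × ℝ => ENNReal.ofReal ((z.1 - z.2) ^ 2)) :=
    ENNReal.measurable_ofReal.comp ((measurable_fst.sub measurable_snd).pow_const 2)
  rw [lintegral_map hgm hfm]
  have hpt : ∀ x : ℝ, ((σ₁ : ℝ) * x + m₁ - ((σ₂ : ℝ) * x + m₂)) ^ 2
      = (((σ₁ : ℝ) - (σ₂ : ℝ)) * x + (m₁ - m₂)) ^ 2 := fun x => by ring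
  simp only [hpt]
  rw [← ofReal_integral_eq_lintegral_ofReal
    (integrable_affine_sq ((σ₁ : ℝ) - (σ₂ : ℝ)) (m₁ - m₂))
    (Filter.Eventually.of_forall fun x => sq_nonneg _)]
  rw [integral_affine_sq]
  rw [add_comm]

lemma coupling_marginals (m₁ m₂ : ℝ) (σ₁ σ₂ : ℝ≥0) :
    ((gaussianReal 0 1).map (fun x => ((σ₁ : ℝ) * x + m₁, (σ₂ : ℝ) * x + m₂))).map Prod.fst
        = gaussianReal m₁ (σ₁ ^ 2)
      ∧ ((gaussianReal 0 1).map (fun x => ((σ₁ : ℝ) * x + m₁, (σ₂ : ℝ) * x + m₂))).map Prod.snd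
        = gaussianReal m₂ (σ₂ ^ 2) := by
  have hfm : Measurable (fun x : ℝ => ((σ₁ : ℝ) * x + m₁, (σ₂ : ℝ) * x + m₂)) :=
    (((measurable_const_mul _).add_const m₁)).prodMk
      (((measurable_const_mul _).add_const m₂))
  constructor
  · rw [Measure.map_map measurable_fst hfm]
    exact (gaussianReal_eq_map m₁ σ₁).symm
  · rw [Measure.map_map measurable_snd hfm]
    exact (gaussianReal_eq_map m₂ σ₂).symm

end W2Gauss

theorem W2Gauss.w2sq_gaussianReal_aux (m₁ m₂ : ℝ) (σ₁ σ₂ : ℝ≥0) :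
    (⨅ P ∈ {P : Measure (ℝ × ℝ) | P.map Prod.fst = gaussianReal m₁ (σ₁ ^ 2)
        ∧ P.map Prod.snd = gaussianReal m₂ (σ₂ ^ 2)},
      ∫⁻ z, ENNReal.ofReal ((z.1 - z.2) ^ 2) ∂P)
      = ENNReal.ofReal ((m₁ - m₂) ^ 2 + ((σ₁ : ℝ) - (σ₂ : ℝ)) ^ 2) := by
  apply le_antisymm
  · refine le_trans (iInf₂_le ((gaussianReal 0 1).map
      (fun x => ((σ₁ : ℝ) * x + m₁, (σ₂ : ℝ) * x + m₂)))
      (W2Gauss.coupling_marginals m₁ m₂ σ₁ σ₂)) ?_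
    rw [W2Gauss.coupling_cost m₁ m₂ σ₁ σ₂]
  · exact le_iInf₂ fun P hP => W2Gauss.cost_lower_bound m₁ m₂ σ₁ σ₂ P hP.1 hP.2


end Aux

/-- For one-dimensional Gaussians,
`W₂²(N(m₁,σ₁²), N(m₂,σ₂²)) = (m₁ - m₂)² + (σ₁ - σ₂)²`. -/
theorem w2sq_gaussianReal (m₁ m₂ : ℝ) (σ₁ σ₂ : ℝ≥0) :
    w2sq (gaussianReal m₁ (σ₁ ^ 2)) (gaussianReal m₂ (σ₂ ^ 2))
      = ENNReal.ofReal ((m₁ - m₂) ^ 2 + ((σ₁ : ℝ) - (σ₂ : ℝ)) ^ 2) := by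
  rw [w2sq]
  exact W2Gauss.w2sq_gaussianReal_aux m₁ m₂ σ₁ σ₂
end
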